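/- arXiv:2101.08223 — 3 statements merged into one kernel-verified Lean document; each statement's English description precedes it below -/
import Mathlib

section
/- For every 3DSMI instance of dimension n with n ≤ 2, there exists a weakly stable matching. -/
/-- A 3DSMI instance of dimension `n`: a directed graph on a vertex set `V`
partitioned into three genders (men, women, dogs), each of size `n`, where every
edge goes from gender `g` to gender `g+1`, together with a rank function such that
for every vertex of out-degree `k` the ranks of its outgoing edges are exactly
`1, …, k`. -/
structure TDSMI (V : Type) [Fintype V] [DecidableEq V] (n : ℕ) where
  E : V → V → Bool
  r : V → V → ℕ
  gender : V → Fin 3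
  gender_card : ∀ g : Fin 3, (Finset.univ.filter fun v => gender v = g).card = n
  edge_gender : ∀ v w : V, E v w → gender w = gender v + 1
  rank_bij : ∀ v : V,
    (Finset.univ.filter fun w => E v w).image (r v)
      = Finset.Icc 1 (Finset.univ.filter fun w => E v w).card

namespace TDSMI

variable {V : Type} [Fintype V] [DecidableEq V] {n : ℕ}

/-- A family: a directed 3-cycle `a → b → c → a`. -/
def IsFamily (G : TDSMI V n) (a b c : V) : Prop :=
  G.E a b ∧ G.E b c ∧ G.E c a

/-- `v` is one of the vertices of the triple `t`. -/
def MemTriple (v : V) (t : V × V × V) : Prop :=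
  v = t.1 ∨ v = t.2.1 ∨ v = t.2.2

/-- A matching: a set of pairwise vertex-disjoint families. -/
def IsMatching (G : TDSMI V n) (F : Finset (V × V × V)) : Prop :=
  (∀ t ∈ F, G.IsFamily t.1 t.2.1 t.2.2) ∧
  ∀ t ∈ F, ∀ t' ∈ F, t ≠ t' → ∀ v : V, ¬ (MemTriple v t ∧ MemTriple v t')

/-- `w` is the vertex that the edge leaving `v` inside its family of `F` points to. -/
def MatchedTo (F : Finset (V × V × V)) (v w : V) : Prop :=
  ∃ t ∈ F, (t.1 = v ∧ t.2.1 = w) ∨ (t.2.1 = v ∧ t.2.2 = w) ∨ (t.2.2 = v ∧ t.1 = w)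

/-- `r(v,w) < R_F(v)`: the rank of the edge `v → w` is smaller than the rank of `v` in
the matching `F` (if `v` is in no family of `F`, its rank is `+∞` and this holds
vacuously). -/
def Prefers (G : TDSMI V n) (F : Finset (V × V × V)) (v w : V) : Prop :=
  ∀ u : V, MatchedTo F v u → G.r v w < G.r v u

/-- The directed 3-cycle `(a, b, c)` blocks the matching `F`. -/
def Blocks (G : TDSMI V n) (F : Finset (V × V × V)) (a b c : V) : Prop :=
  G.IsFamily a b c ∧ G.Prefers F a b ∧ G.Prefers F b c ∧ G.Prefers F c a

/-- A matching is weakly stable if no directed 3-cycle blocks it. -/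
def WeaklyStable (G : TDSMI V n) (F : Finset (V × V × V)) : Prop :=
  ∀ a b c : V, ¬ G.Blocks F a b c

end TDSMI

/-!
A blocking cycle of a singleton matching `{(a, b, c)}` can be rotated so that its first vertex
has the gender of `a`; with at most one vertex per gender it then runs through an edge of the
family itself, which no vertex strictly prefers to itself.

In dimension 2 every vertex `v` has a twin `v'` of the same gender. If some family and its twin
family both exist, they form a perfect matching in which every strictly preferred edge leads
from one family to the other; a blocking cycle would then alternate between the two families,
which is impossible for a cycle of length 3. Otherwise, a family `(a, b, c)` can be blocked only
through a family `(a, b', c')` that `a` prefers. Chasing at most two such blocks from any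
family, and using that no family coexists with its twin, one reaches a family whose singleton
matching is weakly stable.
-/

namespace TDSMI

section MatchedTo

variable {V : Type} {F : Finset (V × V × V)} {a b c : V}

lemma matchedTo_of_mem₁ (h : (a, b, c) ∈ F) : MatchedTo F a b := ⟨_, h, Or.inl ⟨rfl, rfl⟩⟩

lemma matchedTo_of_mem₂ (h : (a, b, c) ∈ F) : MatchedTo F b c :=
  ⟨_, h, Or.inr (Or.inl ⟨rfl, rfl⟩)⟩

lemma matchedTo_of_mem₃ (h : (a, b, c) ∈ F) : MatchedTo F c a :=
  ⟨_, h, Or.inr (Or.inr ⟨rfl, rfl⟩)⟩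

end MatchedTo

variable {V : Type} [Fintype V] [DecidableEq V] {n : ℕ}

section General

variable {G : TDSMI V n} {F : Finset (V × V × V)} {a b c x y z : V}

lemma IsFamily.rotate (h : G.IsFamily a b c) : G.IsFamily b c a := ⟨h.2.1, h.2.2, h.1⟩

lemma IsFamily.gender_snd (h : G.IsFamily a b c) : G.gender b = G.gender a + 1 :=
  G.edge_gender _ _ h.1

lemma IsFamily.gender_thd (h : G.IsFamily a b c) : G.gender c = G.gender a + 1 + 1 := by
  rw [G.edge_gender _ _ h.2.1, h.gender_snd]

lemma IsFamily.genders_eq (h : G.IsFamily a b c) (h' : G.IsFamily x y z)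
    (hx : G.gender x = G.gender a) : G.gender y = G.gender b ∧ G.gender z = G.gender c := by
  rw [h.gender_snd, h.gender_thd, h'.gender_snd, h'.gender_thd, hx]
  exact ⟨rfl, rfl⟩

lemma IsFamily.eq_of_gender_eq {v w : V} (h : G.IsFamily a b c) (hv : MemTriple v (a, b, c))
    (hw : MemTriple w (a, b, c)) (hvw : G.gender v = G.gender w) : v = w := by
  have hb := h.gender_snd
  have hc := h.gender_thd
  simp only [MemTriple] at hv hw
  rcases hv with rfl | rfl | rfl <;> rcases hw with rfl | rfl | rfl <;> first | rfl | omega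

lemma not_prefers_of_matchedTo (h : MatchedTo F x y) : ¬ G.Prefers F x y :=
  fun hp => lt_irrefl _ (hp y h)

lemma Blocks.rotate (h : G.Blocks F x y z) : G.Blocks F y z x :=
  ⟨h.1.rotate, h.2.2.1, h.2.2.2, h.2.1⟩

lemma weaklyStable_of_forall_gender_eq (g : Fin 3)
    (h : ∀ x y z, G.gender x = g → ¬ G.Blocks F x y z) : G.WeaklyStable F := by
  intro x y z hb
  have hy := hb.1.gender_snd
  have hz := hb.1.gender_thd
  rcases (by omega : g = G.gender x ∨ g = G.gender x + 1 ∨ g = G.gender x + 1 + 1)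
    with hg | hg | hg
  · exact h x y z hg.symm hb
  · exact h y z x (hy.trans hg.symm) hb.rotate
  · exact h z x y (hz.trans hg.symm) hb.rotate.rotate

lemma isMatching_empty : G.IsMatching ∅ := by
  simp [IsMatching]

lemma weaklyStable_empty (h : ¬ ∃ a b c, G.IsFamily a b c) : G.WeaklyStable ∅ :=
  fun a b c hb => h ⟨a, b, c, hb.1⟩

lemma isMatching_singleton (h : G.IsFamily a b c) : G.IsMatching {(a, b, c)} := by
  refine ⟨fun t ht => ?_, fun t ht t' ht' hne => ?_⟩
  · rw [Finset.mem_singleton.mp ht]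
    exact h
  · rw [Finset.mem_singleton] at ht ht'
    exact absurd (ht.trans ht'.symm) hne

end General

section DimensionAtMostOne

lemma gender_injective (G : TDSMI V n) (hn : n ≤ 1) : Function.Injective G.gender := by
  intro u w h
  have hcard := G.gender_card (G.gender w)
  exact Finset.card_le_one.mp (hcard.trans_le hn) u (by simp [h]) w (by simp)

lemma weaklyStable_singleton_of_le_one {G : TDSMI V n} (hn : n ≤ 1) {a b c : V}
    (h : G.IsFamily a b c) : G.WeaklyStable {(a, b, c)} := by
  refine weaklyStable_of_forall_gender_eq (G.gender a) fun x y z hx hb => ?_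
  have hy := (h.genders_eq hb.1 hx).1
  rw [G.gender_injective hn hx, G.gender_injective hn hy] at hb
  exact not_prefers_of_matchedTo (matchedTo_of_mem₁ (Finset.mem_singleton_self _)) hb.2.1

end DimensionAtMostOne

section DimensionTwo

lemma exists_twin (G : TDSMI V 2) (v : V) :
    ∃ u, u ≠ v ∧ G.gender u = G.gender v ∧ ∀ x, G.gender x = G.gender v → x = v ∨ x = u := by
  set s := Finset.univ.filter fun x => G.gender x = G.gender v
  have hv : v ∈ s := by simp [s]
  have hcard : (s.erase v).card = 1 := by
    rw [Finset.card_erase_of_mem hv, G.gender_card]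
  obtain ⟨u, hu⟩ := Finset.card_eq_one.mp hcard
  have hus : u ∈ s.erase v := by simp [hu]
  refine ⟨u, Finset.ne_of_mem_erase hus, (Finset.mem_filter.mp (Finset.mem_of_mem_erase hus)).2,
    fun x hx => ?_⟩
  by_cases hxv : x = v
  · exact Or.inl hxv
  · have hxs : x ∈ s.erase v := Finset.mem_erase.mpr ⟨hxv, by simp [s, hx]⟩
    exact Or.inr (by simpa [hu] using hxs)

noncomputable def twin (G : TDSMI V 2) (v : V) : V := (G.exists_twin v).choose

variable {G : TDSMI V 2} {F : Finset (V × V × V)} {a b c x y z : V}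

lemma twin_ne (v : V) : G.twin v ≠ v := (G.exists_twin v).choose_spec.1

@[simp]
lemma gender_twin (v : V) : G.gender (G.twin v) = G.gender v :=
  (G.exists_twin v).choose_spec.2.1

lemma eq_or_eq_twin (h : G.gender x = G.gender v) : x = v ∨ x = G.twin v :=
  (G.exists_twin v).choose_spec.2.2 x h

@[simp]
lemma twin_twin (v : V) : G.twin (G.twin v) = v :=
  ((eq_or_eq_twin (gender_twin v).symm).resolve_left (twin_ne v).symm).symm

lemma eq_twin_of_prefers {u : V} (hm : MatchedTo F x u) (hp : G.Prefers F x y)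
    (hg : G.gender y = G.gender u) : y = G.twin u :=
  (eq_or_eq_twin hg).resolve_left fun h => not_prefers_of_matchedTo hm (h ▸ hp)

lemma IsFamily.not_memTriple_twin (h : G.IsFamily a b c) (hx : MemTriple (G.twin x) (a, b, c)) :
    ¬ MemTriple x (a, b, c) :=
  fun hx' => twin_ne x (h.eq_of_gender_eq hx hx' (gender_twin x))

lemma isMatching_pair (h : G.IsFamily a b c) (h' : G.IsFamily (G.twin a) (G.twin b) (G.twin c)) :
    G.IsMatching {(a, b, c), (G.twin a, G.twin b, G.twin c)} := by
  have hdisj : ∀ v, ¬ (MemTriple v (a, b, c) ∧ MemTriple v (G.twin a, G.twin b, G.twin c)) := by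
    rintro v ⟨hv, hv'⟩
    refine h.not_memTriple_twin ?_ hv
    simp only [MemTriple] at hv' ⊢
    rcases hv' with rfl | rfl | rfl <;> simp
  refine ⟨fun t ht => ?_, fun t ht t' ht' hne v hv => ?_⟩
  · simp only [Finset.mem_insert, Finset.mem_singleton] at ht
    rcases ht with rfl | rfl
    exacts [h, h']
  · simp only [Finset.mem_insert, Finset.mem_singleton] at ht ht'
    rcases ht with rfl | rfl <;> rcases ht' with rfl | rfl
    exacts [hne rfl, hdisj v hv, hdisj v hv.symm, hne rfl]

lemma weaklyStable_pair (h : G.IsFamily a b c) :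
    G.WeaklyStable {(a, b, c), (G.twin a, G.twin b, G.twin c)} := by
  have hf : (a, b, c) ∈ ({(a, b, c), (G.twin a, G.twin b, G.twin c)} : Finset _) := by simp
  have hf' : (G.twin a, G.twin b, G.twin c) ∈
      ({(a, b, c), (G.twin a, G.twin b, G.twin c)} : Finset _) := by simp
  refine weaklyStable_of_forall_gender_eq (G.gender a) fun x y z hx ⟨hT, p1, p2, p3⟩ => ?_
  obtain ⟨hy, hz⟩ := h.genders_eq hT hx
  rcases eq_or_eq_twin hx with rfl | rfl
  · obtain rfl := eq_twin_of_prefers (matchedTo_of_mem₁ hf) p1 hy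
    obtain rfl : z = c := by simpa using eq_twin_of_prefers (matchedTo_of_mem₂ hf') p2 (by simpa)
    exact twin_ne x (eq_twin_of_prefers (matchedTo_of_mem₃ hf) p3 rfl).symm
  · obtain rfl : y = b := by simpa using eq_twin_of_prefers (matchedTo_of_mem₁ hf') p1 (by simpa)
    obtain rfl := eq_twin_of_prefers (matchedTo_of_mem₂ hf) p2 hz
    exact twin_ne a (by simpa using eq_twin_of_prefers (matchedTo_of_mem₃ hf') p3 (by simp))

/-- Up to rotating `(a, b, c)`, the family `(a, b', c')` here and the twin family are the only
cycles that can block `{(a, b, c)}`. -/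
def BlockedAt (G : TDSMI V 2) (a b c : V) : Prop :=
  G.IsFamily a (G.twin b) (G.twin c) ∧ G.r a (G.twin b) < G.r a b

lemma weaklyStable_singleton_of_not_blockedAt
    (hno : ∀ p q s, G.IsFamily p q s → ¬ G.IsFamily (G.twin p) (G.twin q) (G.twin s))
    (h : G.IsFamily a b c) (ha : ¬ G.BlockedAt a b c) (hb : ¬ G.BlockedAt b c a)
    (hc : ¬ G.BlockedAt c a b) : G.WeaklyStable {(a, b, c)} := by
  have hf : (a, b, c) ∈ ({(a, b, c)} : Finset _) := Finset.mem_singleton_self _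
  refine weaklyStable_of_forall_gender_eq (G.gender a) fun x y z hx ⟨hT, p1, p2, p3⟩ => ?_
  obtain ⟨hy, hz⟩ := h.genders_eq hT hx
  rcases eq_or_eq_twin hx with rfl | rfl
  · obtain rfl := eq_twin_of_prefers (matchedTo_of_mem₁ hf) p1 hy
    rcases eq_or_eq_twin hz with rfl | rfl
    · exact not_prefers_of_matchedTo (matchedTo_of_mem₃ hf) p3
    · exact ha ⟨hT, p1 b (matchedTo_of_mem₁ hf)⟩
  · rcases eq_or_eq_twin hy with rfl | rfl
    · obtain rfl := eq_twin_of_prefers (matchedTo_of_mem₂ hf) p2 hz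
      exact hb ⟨hT.rotate, p2 c (matchedTo_of_mem₂ hf)⟩
    · rcases eq_or_eq_twin hz with rfl | rfl
      · exact hc ⟨hT.rotate.rotate, p3 a (matchedTo_of_mem₃ hf)⟩
      · exact hno a b c h hT

/-- If `(a, b, c)` is blocked at `a` by `(a, b', c')`, then either `(a, b', c')`, `(a, b', c)` or
`(a, b, c')` has a weakly stable singleton matching. -/
lemma exists_weaklyStable_singleton_of_blockedAt
    (hno : ∀ p q s, G.IsFamily p q s → ¬ G.IsFamily (G.twin p) (G.twin q) (G.twin s))
    (h : G.IsFamily a b c) (hbl : G.BlockedAt a b c) :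
    ∃ p q s, G.IsFamily p q s ∧ G.WeaklyStable {(p, q, s)} := by
  obtain ⟨hg, hlt⟩ := hbl
  have hga : ¬ G.BlockedAt a (G.twin b) (G.twin c) := fun h' => by
    simp only [BlockedAt, twin_twin] at h'
    exact lt_asymm hlt h'.2
  by_cases hB : G.BlockedAt (G.twin b) (G.twin c) a
  · simp only [BlockedAt, twin_twin] at hB
    refine ⟨a, G.twin b, c, ⟨hg.1, hB.1.1, h.2.2⟩,
      weaklyStable_singleton_of_not_blockedAt hno ⟨hg.1, hB.1.1, h.2.2⟩ ?_ ?_ ?_⟩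
    · exact fun h' => lt_asymm hlt (by simpa using h'.2)
    · exact fun h' => lt_asymm hB.2 h'.2
    · exact fun h' => hno _ _ _ h'.1 (by simpa using hg.rotate.rotate)
  by_cases hC : G.BlockedAt (G.twin c) a (G.twin b)
  · simp only [BlockedAt, twin_twin] at hC
    refine ⟨a, b, G.twin c, ⟨h.1, hC.1.2.2, hg.2.2⟩,
      weaklyStable_singleton_of_not_blockedAt hno ⟨h.1, hC.1.2.2, hg.2.2⟩ ?_ ?_ ?_⟩
    · exact fun h' => hno _ _ _ h'.1 (by simpa using hC.1.rotate)
    · exact fun h' => hno _ _ _ h'.1 (by simpa using hg.rotate)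
    · exact fun h' => hno _ _ _ h'.1 (by simpa using h.rotate.rotate)
  exact ⟨a, G.twin b, G.twin c, hg, weaklyStable_singleton_of_not_blockedAt hno hg hga hB hC⟩

lemma exists_weaklyStable_singleton
    (hno : ∀ p q s, G.IsFamily p q s → ¬ G.IsFamily (G.twin p) (G.twin q) (G.twin s))
    (h : G.IsFamily a b c) : ∃ p q s, G.IsFamily p q s ∧ G.WeaklyStable {(p, q, s)} := by
  by_cases ha : G.BlockedAt a b c
  · exact exists_weaklyStable_singleton_of_blockedAt hno h ha
  by_cases hb : G.BlockedAt b c a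
  · exact exists_weaklyStable_singleton_of_blockedAt hno h.rotate hb
  by_cases hc : G.BlockedAt c a b
  · exact exists_weaklyStable_singleton_of_blockedAt hno h.rotate.rotate hc
  exact ⟨a, b, c, h, weaklyStable_singleton_of_not_blockedAt hno h ha hb hc⟩

lemma exists_isMatching_weaklyStable_of_isFamily (h : G.IsFamily a b c) :
    ∃ F : Finset (V × V × V), G.IsMatching F ∧ G.WeaklyStable F := by
  by_cases hpair : ∃ p q s, G.IsFamily p q s ∧ G.IsFamily (G.twin p) (G.twin q) (G.twin s)
  · obtain ⟨p, q, s, hf, hf'⟩ := hpair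
    exact ⟨_, isMatching_pair hf hf', weaklyStable_pair hf⟩
  · push Not at hpair
    obtain ⟨p, q, s, hf, hst⟩ := exists_weaklyStable_singleton hpair h
    exact ⟨_, isMatching_singleton hf, hst⟩

end DimensionTwo

end TDSMI

/-- Every 3DSMI instance of dimension `n ≤ 2` has a weakly stable matching. -/
theorem stmt_0 {V : Type} [Fintype V] [DecidableEq V] {n : ℕ} (hn : n ≤ 2)
    (G : TDSMI V n) :
    ∃ F : Finset (V × V × V), G.IsMatching F ∧ G.WeaklyStable F := by
  by_cases hfam : ∃ a b c, G.IsFamily a b c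
  · obtain ⟨a, b, c, hf⟩ := hfam
    rcases Nat.lt_or_eq_of_le hn with hn | rfl
    · exact ⟨_, TDSMI.isMatching_singleton hf, TDSMI.weaklyStable_singleton_of_le_one (by omega) hf⟩
    · exact TDSMI.exists_isMatching_weaklyStable_of_isFamily hf
  · exact ⟨∅, TDSMI.isMatching_empty, TDSMI.weaklyStable_empty hfam⟩
end

section
/- The 3DSMI instance of dimension 3 with vertex set {0,1,…,8} (vertex v having gender v mod 3, edges going from gender g to gender (g+1) mod 3), with rank-1 edges 0→1, 1→2, 2→3, 3→4, 4→5, 5→0, 6→1, 7→2, 8→0, rank-2 edges 1→8, 2→6, 0→4, 3→7, 5→3, 7→5, and rank-3 edge 0→7, admits no weakly stable matching. -/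
def rank1Edges : List (ℕ × ℕ) := [(0,1),(1,2),(2,3),(3,4),(4,5),(5,0),(6,1),(7,2),(8,0)]
def rank2Edges : List (ℕ × ℕ) := [(1,8),(2,6),(0,4),(3,7),(5,3),(7,5)]
def rank3Edges : List (ℕ × ℕ) := [(0,7)]

/-- The 3DSMI instance of dimension 3 from Fig. 3 of the paper. -/
def G3 : TDSMI (Fin 9) 3 where
  E v w := decide ((v.val, w.val) ∈ rank1Edges ++ rank2Edges ++ rank3Edges)
  r v w :=
    if (v.val, w.val) ∈ rank1Edges then 1
    else if (v.val, w.val) ∈ rank2Edges then 2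
    else if (v.val, w.val) ∈ rank3Edges then 3
    else 0
  gender v := ⟨v.val % 3, Nat.mod_lt _ (by norm_num)⟩
  gender_card := by decide
  edge_gender := by decide
  rank_bij := by decide

namespace TDSMI

variable {V : Type} [Fintype V] [DecidableEq V] {n : ℕ}

instance (G : TDSMI V n) (a b c : V) : Decidable (G.IsFamily a b c) := by
  unfold IsFamily; infer_instance

instance (v : V) (t : V × V × V) : Decidable (MemTriple v t) := by
  unfold MemTriple; infer_instance

instance (F : Finset (V × V × V)) (v w : V) : Decidable (MatchedTo F v w) := by
  unfold MatchedTo; infer_instance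

instance (G : TDSMI V n) (F : Finset (V × V × V)) (v w : V) :
    Decidable (G.Prefers F v w) := by
  unfold Prefers; infer_instance

instance (G : TDSMI V n) (F : Finset (V × V × V)) (a b c : V) :
    Decidable (G.Blocks F a b c) := by
  unfold Blocks; infer_instance

instance (G : TDSMI V n) (F : Finset (V × V × V)) : Decidable (G.IsMatching F) := by
  unfold IsMatching; exact @instDecidableAnd _ _ inferInstance inferInstance

end TDSMI

set_option maxRecDepth 8000

abbrev T9 : Type := Fin 9 × Fin 9 × Fin 9

/-- Family triples of `G3` containing vertex `0`. -/
def lLA : List T9 :=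
  [(0,1,8),(1,8,0),(8,0,1),(0,4,5),(4,5,0),(5,0,4),(0,7,5),(7,5,0),(5,0,7)]

/-- Family triples of `G3` containing vertex `3`. -/
def lLB : List T9 :=
  [(2,3,7),(3,7,2),(7,2,3),(3,4,5),(4,5,3),(5,3,4),(3,7,5),(7,5,3),(5,3,7)]

/-- Family triples of `G3` containing vertex `6`. -/
def lLC : List T9 := [(1,2,6),(2,6,1),(6,1,2)]

/-- All family triples of `G3`. -/
def lL : List T9 := lLA ++ lLB ++ lLC

lemma fam_mem : ∀ t : T9, G3.IsFamily t.1 t.2.1 t.2.2 → t ∈ lL := by decide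

lemma cover : ∀ t ∈ lL, TDSMI.MemTriple (0 : Fin 9) t ∨ TDSMI.MemTriple (3 : Fin 9) t ∨
    TDSMI.MemTriple (6 : Fin 9) t := by decide

lemma memA : ∀ t ∈ lL, TDSMI.MemTriple (0 : Fin 9) t → t ∈ lLA := by decide
lemma memB : ∀ t ∈ lL, TDSMI.MemTriple (3 : Fin 9) t → t ∈ lLB := by decide
lemma memC : ∀ t ∈ lL, TDSMI.MemTriple (6 : Fin 9) t → t ∈ lLC := by decide

/-- Two triples are vertex-disjoint. -/
def Disj (s t : T9) : Prop :=
  ∀ v : Fin 9, ¬ (TDSMI.MemTriple v s ∧ TDSMI.MemTriple v t)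

instance (s t : T9) : Decidable (Disj s t) := by unfold Disj; infer_instance

/-- Disjointness lifted to optional triples. -/
def ODisj : Option T9 → Option T9 → Prop
  | some a, some b => Disj a b
  | _, _ => True

instance : ∀ (oa ob : Option T9), Decidable (ODisj oa ob)
  | some _, some _ => inferInstanceAs (Decidable (Disj _ _))
  | some _, none => inferInstanceAs (Decidable True)
  | none, _ => inferInstanceAs (Decidable True)

lemma neAB : ∀ a ∈ lLA, ∀ b ∈ lLB, a ≠ b := by
  intro a ha b hb; fin_cases ha <;> fin_cases hb <;> decide
lemma neAC : ∀ a ∈ lLA, ∀ b ∈ lLC, a ≠ b := by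
  intro a ha b hb; fin_cases ha <;> fin_cases hb <;> decide
lemma neBC : ∀ a ∈ lLB, ∀ b ∈ lLC, a ≠ b := by
  intro a ha b hb; fin_cases ha <;> fin_cases hb <;> decide

set_option maxHeartbeats 4000000 in
lemma key : ∀ oa ∈ (none :: lLA.map some),
    ∀ ob ∈ (none :: lLB.map some),
    ∀ oc ∈ (none :: lLC.map some),
    ODisj oa ob → ODisj oa oc → ODisj ob oc →
    lL.any (fun t => decide
      (G3.Blocks (oa.toFinset ∪ ob.toFinset ∪ oc.toFinset) t.1 t.2.1 t.2.2)) = true := by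
  intro oa hoa ob hob oc hoc
  fin_cases hoa <;> fin_cases hob <;> fin_cases hoc <;> decide

/-- This instance admits no weakly stable matching. -/
theorem stmt_3 : ¬ ∃ F : Finset (Fin 9 × Fin 9 × Fin 9),
    G3.IsMatching F ∧ G3.WeaklyStable F := by
  rintro ⟨F, hM, hS⟩
  have hFL : ∀ t ∈ F, t ∈ lL := fun t ht => fam_mem t (hM.1 t ht)
  have hsingle : ∀ (v : Fin 9) (t t' : T9), t ∈ F → t' ∈ F →
      TDSMI.MemTriple v t → TDSMI.MemTriple v t' → t = t' := by
    intro v t t' ht ht' hmt hmt'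
    by_contra hne
    exact hM.2 t ht t' ht' hne v ⟨hmt, hmt'⟩
  have hopt : ∀ (v : Fin 9),
      ∃ o : Option T9, (F.filter (fun t => TDSMI.MemTriple v t)) = o.toFinset ∧
        ∀ a, o = some a → a ∈ F ∧ TDSMI.MemTriple v a := by
    intro v
    rcases (F.filter (fun t => TDSMI.MemTriple v t)).eq_empty_or_nonempty with h | ⟨a, ha⟩
    · exact ⟨none, h, by simp⟩
    · have ha' := Finset.mem_filter.mp ha
      refine ⟨some a, ?_, ?_⟩
      · apply Finset.eq_singleton_iff_unique_mem.mpr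
        refine ⟨ha, fun b hb => ?_⟩
        have hb' := Finset.mem_filter.mp hb
        exact hsingle v b a hb'.1 ha'.1 hb'.2 ha'.2
      · rintro b hb
        cases hb
        exact ha'
  obtain ⟨oa, hAeq, hoa⟩ := hopt 0
  obtain ⟨ob, hBeq, hob⟩ := hopt 3
  obtain ⟨oc, hCeq, hoc⟩ := hopt 6
  have hFeq : F = oa.toFinset ∪ ob.toFinset ∪ oc.toFinset := by
    rw [← hAeq, ← hBeq, ← hCeq]
    apply Finset.Subset.antisymm
    · intro t ht
      rcases cover t (hFL t ht) with h | h | h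
      · exact Finset.mem_union_left _ (Finset.mem_union_left _
          (Finset.mem_filter.mpr ⟨ht, h⟩))
      · exact Finset.mem_union_left _ (Finset.mem_union_right _
          (Finset.mem_filter.mpr ⟨ht, h⟩))
      · exact Finset.mem_union_right _ (Finset.mem_filter.mpr ⟨ht, h⟩)
    · intro t ht
      rcases Finset.mem_union.mp ht with h | h
      · rcases Finset.mem_union.mp h with h' | h'
        · exact (Finset.mem_filter.mp h').1
        · exact (Finset.mem_filter.mp h').1
      · exact (Finset.mem_filter.mp h).1
  have hmemopt : ∀ (v : Fin 9) (o : Option T9) (LX : List T9),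
      (∀ a, o = some a → a ∈ F ∧ TDSMI.MemTriple v a) →
      (∀ t ∈ lL, TDSMI.MemTriple v t → t ∈ LX) →
      o ∈ (none :: LX.map some) := by
    intro v o LX ho hmem
    cases o with
    | none => exact List.mem_cons_self
    | some a =>
      obtain ⟨haF, haM⟩ := ho a rfl
      exact List.mem_cons_of_mem _ (List.mem_map_of_mem (f := some) (hmem a (hFL a haF) haM))
  have hdisj : ∀ (o o' : Option T9),
      (∀ a, o = some a → a ∈ F) → (∀ a, o' = some a → a ∈ F) →
      (∀ a, o = some a → ∀ b, o' = some b → a ≠ b) → ODisj o o' := by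
    intro o o' ho ho' hne
    cases o with
    | none => trivial
    | some a =>
      cases o' with
      | none => trivial
      | some b =>
        intro v hv
        exact hM.2 a (ho a rfl) b (ho' b rfl) (hne a rfl b rfl) v hv
  have hoaF : ∀ a, oa = some a → a ∈ F := fun a h => (hoa a h).1
  have hobF : ∀ a, ob = some a → a ∈ F := fun a h => (hob a h).1
  have hocF : ∀ a, oc = some a → a ∈ F := fun a h => (hoc a h).1
  have hoaL : ∀ a, oa = some a → a ∈ lLA :=
    fun a h => memA a (hFL a (hoaF a h)) (hoa a h).2
  have hobL : ∀ a, ob = some a → a ∈ lLB :=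
    fun a h => memB a (hFL a (hobF a h)) (hob a h).2
  have hocL : ∀ a, oc = some a → a ∈ lLC :=
    fun a h => memC a (hFL a (hocF a h)) (hoc a h).2
  obtain ⟨t, htL, hblk⟩ := List.any_eq_true.mp (key oa (hmemopt 0 oa lLA hoa memA)
    ob (hmemopt 3 ob lLB hob memB) oc (hmemopt 6 oc lLC hoc memC)
    (hdisj oa ob hoaF hobF fun a ha b hb => neAB a (hoaL a ha) b (hobL b hb))
    (hdisj oa oc hoaF hocF fun a ha b hb => neAC a (hoaL a ha) b (hocL b hb))
    (hdisj ob oc hobF hocF fun a ha b hb => neBC a (hobL a ha) b (hocL b hb)))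
  exact hS t.1 t.2.1 t.2.2 (hFeq ▸ of_decide_eq_true hblk)
end

section
/- For every integer k ≥ 3 there exists a k-DSMI-CYC instance of dimension n = 5 that admits no weakly stable matching. -/
/-- A `k`-DSMI-CYC instance of dimension `n`: a directed graph on a vertex set `V`
partitioned into `k` genders (indexed by `ZMod k`), each of size `n`, where every edge
goes from gender `g` to gender `g + 1`, together with a rank function such that for
every vertex of out-degree `d` the ranks of its outgoing edges are exactly `1, …, d`. -/
structure KDSMI (k : ℕ) (V : Type) [Fintype V] [DecidableEq V] (n : ℕ) where
  E : V → V → Bool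
  r : V → V → ℕ
  gender : V → ZMod k
  gender_card : ∀ g : ZMod k, (Finset.univ.filter fun v => gender v = g).card = n
  edge_gender : ∀ v w : V, E v w → gender w = gender v + 1
  rank_bij : ∀ v : V,
    (Finset.univ.filter fun w => E v w).image (r v)
      = Finset.Icc 1 (Finset.univ.filter fun w => E v w).card

namespace KDSMI

variable {k : ℕ} {V : Type} [Fintype V] [DecidableEq V] {n : ℕ}

/-- A family: a directed `k`-cycle containing exactly one vertex of each gender,
recorded as a function `f` sending each gender `i` to the family member `f i` of that
gender, with edges `f i → f (i + 1)`. -/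
def IsFamily (G : KDSMI k V n) (f : ZMod k → V) : Prop :=
  (∀ i : ZMod k, G.gender (f i) = i) ∧ ∀ i : ZMod k, G.E (f i) (f (i + 1))

/-- A matching: a set of pairwise vertex-disjoint families. -/
def IsMatching (G : KDSMI k V n) (F : Finset (ZMod k → V)) : Prop :=
  (∀ f ∈ F, G.IsFamily f) ∧
  ∀ f ∈ F, ∀ g ∈ F, f ≠ g → ∀ i j : ZMod k, f i ≠ g j

/-- `w` is the vertex that the edge leaving `v` inside its family of `F` points to. -/
def MatchedTo (F : Finset (ZMod k → V)) (v w : V) : Prop :=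
  ∃ f ∈ F, ∃ i : ZMod k, f i = v ∧ f (i + 1) = w

/-- `r(v,w) < R_F(v)` (vacuously true if `v` lies in no family of `F`, its rank then
being `+∞`). -/
def Prefers (G : KDSMI k V n) (F : Finset (ZMod k → V)) (v w : V) : Prop :=
  ∀ u : V, MatchedTo F v u → G.r v w < G.r v u

/-- The directed `k`-cycle `f` (one vertex per gender) blocks the matching `F`. -/
def Blocks (G : KDSMI k V n) (F : Finset (ZMod k → V)) (f : ZMod k → V) : Prop :=
  G.IsFamily f ∧ ∀ i : ZMod k, G.Prefers F (f i) (f (i + 1))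

/-- A matching is weakly stable if no directed `k`-cycle with one vertex per gender
blocks it. -/
def WeaklyStable (G : KDSMI k V n) (F : Finset (ZMod k → V)) : Prop :=
  ∀ f : ZMod k → V, ¬ G.Blocks F f

end KDSMI

/-!
Genders 0, 1, 2 carry a gadget on five vertices, and every later gender only links vertices of
the same class `cls`, so each family is a gadget 3-cycle `(a, b, c)` closed up through vertices of
class `a`. There are exactly five such 3-cycles and their conflict graph is a 5-cycle. A finite
check shows that for every set of pairwise disjoint gadget cycles, some gadget cycle is strictly
preferred by each of its three vertices to their partners. Only the family starting at `a`, if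
any, uses vertices of class `a` at the genders `≥ 3`, so that cycle can be closed up there through
unused vertices of its class, which gives a blocking `k`-cycle.
-/

theorem List.Nodup.image_idxOf_add_one_toFinset {α : Type*} [DecidableEq α] {L : List α}
    (hL : L.Nodup) : L.toFinset.image (fun a => L.idxOf a + 1) = Finset.Icc 1 L.length := by
  ext n
  simp only [Finset.mem_image, List.mem_toFinset, Finset.mem_Icc]
  constructor
  · rintro ⟨a, ha, rfl⟩
    exact ⟨Nat.le_add_left 1 _, List.idxOf_lt_length_of_mem ha⟩
  · rintro ⟨h1, h2⟩
    refine ⟨L[n - 1], List.getElem_mem _, ?_⟩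
    rw [hL.idxOf_getElem]
    omega

theorem ZMod.val_add_one_eq_or {k : ℕ} [NeZero k] (i : ZMod k) :
    (i + 1).val = i.val + 1 ∨ (i.val + 1 = k ∧ (i + 1).val = 0) := by
  rw [ZMod.val_add, ZMod.val_one_eq_one_mod, Nat.add_mod_mod]
  rcases Nat.lt_or_eq_of_le (ZMod.val_lt i : i.val + 1 ≤ k) with h | h
  · exact Or.inl (Nat.mod_eq_of_lt h)
  · exact Or.inr ⟨h, by simp [← h]⟩

namespace KDSMI

variable {k m n : ℕ} {V : Type} [Fintype V] [DecidableEq V]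

theorem IsMatching.eq_of_apply_eq {G : KDSMI k V n} {F : Finset (ZMod k → V)}
    (hM : G.IsMatching F) {f g : ZMod k → V} (hf : f ∈ F) (hg : g ∈ F) {i j : ZMod k}
    (h : f i = g j) : f = g := by
  by_contra hne
  exact hM.2 f hf g hg hne i j h

theorem IsMatching.exists_of_matchedTo {G : KDSMI k V n} {F : Finset (ZMod k → V)}
    (hM : G.IsMatching F) {v u : V} {i : ZMod k} (hv : G.gender v = i) (h : MatchedTo F v u) :
    ∃ f ∈ F, f i = v ∧ f (i + 1) = u := by
  obtain ⟨f, hf, j, rfl, rfl⟩ := h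
  obtain rfl : j = i := ((hM.1 f hf).1 j).symm.trans hv
  exact ⟨f, hf, rfl, rfl⟩

/-- Through `e`, a vertex is a pair `(gender, label)`; `(g, x)` points to `(g + 1, y)` for the
labels `y` in the preference list `L g x`, ranked by their position in it. -/
def ofLists (e : V ≃ ZMod k × Fin m) (L : ZMod k → Fin m → List (Fin m))
    (hL : ∀ g x, (L g x).Nodup) : KDSMI k V m where
  E v w := decide ((e w).1 = (e v).1 + 1 ∧ (e w).2 ∈ L (e v).1 (e v).2)
  r v w := (L (e v).1 (e v).2).idxOf (e w).2 + 1
  gender v := (e v).1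
  gender_card g := by
    have hfiber : (Finset.univ.filter fun v => (e v).1 = g)
        = Finset.univ.image fun x => e.symm (g, x) := by
      ext v
      simp only [Finset.mem_filter, Finset.mem_univ, true_and, Finset.mem_image]
      exact ⟨fun h => ⟨(e v).2, by simp [← h]⟩, fun ⟨x, hx⟩ => by simp [← hx]⟩
    rw [hfiber, Finset.card_image_of_injective _ fun x y h => by simpa using h,
      Finset.card_univ, Fintype.card_fin]
  edge_gender v w h := (of_decide_eq_true h).1
  rank_bij v := by
    have hout : (Finset.univ.filter fun w =>
          decide ((e w).1 = (e v).1 + 1 ∧ (e w).2 ∈ L (e v).1 (e v).2) = true)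
        = (L (e v).1 (e v).2).toFinset.image fun x => e.symm ((e v).1 + 1, x) := by
      ext w
      simp only [Finset.mem_filter, Finset.mem_univ, true_and, decide_eq_true_eq,
        Finset.mem_image, List.mem_toFinset]
      exact ⟨fun ⟨h1, h2⟩ => ⟨(e w).2, h2, by simp [← h1]⟩, fun ⟨x, hx, hw⟩ => by simp [← hw, hx]⟩
    rw [hout, Finset.card_image_of_injective _ fun x y h => by simpa using h,
      List.toFinset_card_of_nodup (hL _ _), Finset.image_image]
    simpa [Function.comp_def] using (hL _ _).image_idxOf_add_one_toFinset

theorem ofLists_E {e : V ≃ ZMod k × Fin m} {L : ZMod k → Fin m → List (Fin m)}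
    {hL : ∀ g x, (L g x).Nodup} {v w : V} :
    (ofLists e L hL).E v w = true ↔ (e w).1 = (e v).1 + 1 ∧ (e w).2 ∈ L (e v).1 (e v).2 :=
  decide_eq_true_iff

end KDSMI

namespace KDSMI.Gadget

def pref0 : Fin 5 → List (Fin 5) := ![[0, 4, 3], [4, 3, 1], [0], [], []]
def pref1 : Fin 5 → List (Fin 5) := ![[0, 4], [1, 0, 4], [2, 4], [2, 3], []]
def pref2 : Fin 5 → List (Fin 5) := ![[1, 4, 2], [0, 3, 2], [0, 3, 2], [2, 1, 4], [0, 3]]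
def cls : Fin 5 → Fin 5 := ![0, 1, 2, 0, 1]
def prefCls : Fin 5 → List (Fin 5) := ![[3, 0], [4, 1], [2], [0, 3], [1, 4]]

/-- From gender 3 on, a vertex points to the vertices of its class: in effect the edge from
`c` at gender 2 to `y` at gender 3 leads back to the gender-0 vertex `cls y`. -/
def layerPrefs : ℕ → Fin 5 → List (Fin 5)
  | 0 => pref0
  | 1 => pref1
  | 2 => pref2
  | _ + 3 => prefCls

theorem nodup_layerPrefs : ∀ l x, (layerPrefs l x).Nodup
  | 0 => by decide
  | 1 => by decide
  | 2 => by decide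
  | _ + 3 => show ∀ x, (prefCls x).Nodup by decide

theorem layerPrefs_of_three_le {l : ℕ} (h : 3 ≤ l) : layerPrefs l = prefCls := by
  obtain ⟨l, rfl⟩ := Nat.exists_eq_add_of_le' h
  rfl

theorem mem_prefCls {x y : Fin 5} : y ∈ prefCls x ↔ cls y = cls x := by
  revert x y; decide

theorem cls_of_mem_pref0 {a b : Fin 5} : b ∈ pref0 a → cls a = a := by
  revert a b; decide

theorem exists_ne_cls_eq {a y : Fin 5} : a ≠ 2 → cls y = a → ∃ x, x ≠ y ∧ cls x = a := by
  revert a y; decide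

def cycle : Fin 5 → Fin 5 × Fin 5 × Fin 5 :=
  ![(0, 0, 4), (0, 3, 2), (1, 3, 3), (1, 1, 0), (2, 0, 0)]

theorem cycle_injective : Function.Injective cycle := by decide

theorem mem_pref_cycle (j : Fin 5) :
    (cycle j).2.1 ∈ pref0 (cycle j).1 ∧ (cycle j).2.2 ∈ pref1 (cycle j).2.1 ∧
      ∀ x, cls x = cls (cycle j).1 → x ∈ pref2 (cycle j).2.2 := by
  revert j; decide

theorem exists_cycle_eq {a b c y : Fin 5} :
    b ∈ pref0 a → c ∈ pref1 b → y ∈ pref2 c → cls y = cls a → ∃ j, cycle j = (a, b, c) := by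
  revert a b c y; decide

/-- At gender 2 the comparison is made for all gender-3 vertices `x`, `y` that can close up `t`
and `tr s`. `t.1 ≠ 2` because the class of `2` is a singleton: a cycle cannot be closed up
through it next to a family that already starts at `2`. -/
def CycleBlocks {ι : Type*} (M : ι → Prop) (tr : ι → Fin 5 × Fin 5 × Fin 5)
    (t : Fin 5 × Fin 5 × Fin 5) : Prop :=
  (∀ s, M s → (tr s).1 = t.1 →
    t.1 ≠ 2 ∧ (pref0 t.1).idxOf t.2.1 < (pref0 t.1).idxOf (tr s).2.1) ∧
  (∀ s, M s → (tr s).2.1 = t.2.1 →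
    (pref1 t.2.1).idxOf t.2.2 < (pref1 t.2.1).idxOf (tr s).2.2) ∧
  (∀ s, M s → (tr s).2.2 = t.2.2 → ∀ x y, cls x = cls t.1 → cls y = cls (tr s).1 →
    (pref2 t.2.2).idxOf x < (pref2 t.2.2).idxOf y)

instance {ι : Type*} [Fintype ι] (M : ι → Prop) [DecidablePred M]
    (tr : ι → Fin 5 × Fin 5 × Fin 5) (t : Fin 5 × Fin 5 × Fin 5) :
    Decidable (CycleBlocks M tr t) := by
  unfold CycleBlocks; infer_instance

theorem CycleBlocks.mono {ι κ : Type*} {M : ι → Prop} {tr : ι → Fin 5 × Fin 5 × Fin 5}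
    {M' : κ → Prop} {tr' : κ → Fin 5 × Fin 5 × Fin 5} {t : Fin 5 × Fin 5 × Fin 5}
    (h : ∀ s', M' s' → ∃ s, M s ∧ tr s = tr' s') (hB : CycleBlocks M tr t) :
    CycleBlocks M' tr' t := by
  obtain ⟨h0, h1, h2⟩ := hB
  refine ⟨fun s' hs' => ?_, fun s' hs' => ?_, fun s' hs' => ?_⟩ <;>
    obtain ⟨s, hs, hst⟩ := h s' hs' <;> rw [← hst]
  exacts [h0 s hs, h1 s hs, h2 s hs]

-- Conflicting cycles are consecutive on the 5-cycle `0 - 1 - 2 - 3 - 4 - 0`.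
theorem exists_cycleBlocks : ∀ S : Finset (Fin 5),
    (∀ i ∈ S, ∀ j ∈ S, i ≠ j →
      (cycle i).1 ≠ (cycle j).1 ∧ (cycle i).2.1 ≠ (cycle j).2.1 ∧ (cycle i).2.2 ≠ (cycle j).2.2) →
    ∃ j, CycleBlocks (· ∈ S) cycle (cycle j) := by
  decide

variable {k : ℕ} {V : Type} [Fintype V] [DecidableEq V]

def toKDSMI (e : V ≃ ZMod k × Fin 5) : KDSMI k V 5 :=
  ofLists e (fun g => layerPrefs g.val) fun g => nodup_layerPrefs g.val

def familyTriple (e : V ≃ ZMod k × Fin 5) (f : ZMod k → V) : Fin 5 × Fin 5 × Fin 5 :=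
  ((e (f 0)).2, (e (f 1)).2, (e (f 2)).2)

variable {e : V ≃ ZMod k × Fin 5} {f : ZMod k → V}

theorem label_add_one_mem (hf : (toKDSMI e).IsFamily f) (i : ZMod k) :
    (e (f (i + 1))).2 ∈ layerPrefs i.val (e (f i)).2 := by
  have hg : (e (f i)).1 = i := hf.1 i
  simpa only [hg] using (ofLists_E.1 (hf.2 i)).2

theorem cls_label_natCast (hf : (toKDSMI e).IsFamily f) {m : ℕ} (h3 : 3 ≤ m) (hm : m ≤ k) :
    cls (e (f m)).2 = cls (e (f 3)).2 := by
  induction m, h3 using Nat.le_induction with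
  | base => norm_cast
  | succ m h3 ih =>
    have h := label_add_one_mem hf (m : ZMod k)
    rw [ZMod.val_cast_of_lt (by omega), layerPrefs_of_three_le h3, mem_prefCls] at h
    push_cast
    rw [h, ih (by omega)]

theorem familyTriple_mem_prefs (hk : 3 ≤ k) (hf : (toKDSMI e).IsFamily f) :
    (e (f 1)).2 ∈ pref0 (e (f 0)).2 ∧ (e (f 2)).2 ∈ pref1 (e (f 1)).2 ∧
      (e (f 3)).2 ∈ pref2 (e (f 2)).2 := by
  have h0 := label_add_one_mem hf 0
  have h1 := label_add_one_mem hf 1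
  have h2 := label_add_one_mem hf 2
  rw [ZMod.val_zero, zero_add] at h0
  rw [ZMod.val_one_eq_one_mod, Nat.mod_eq_of_lt (by omega), one_add_one_eq_two] at h1
  rw [ZMod.val_ofNat_of_lt (show 2 < k by omega), two_add_one_eq_three] at h2
  exact ⟨h0, h1, h2⟩

theorem cls_label_zero (hk : 3 ≤ k) (hf : (toKDSMI e).IsFamily f) :
    cls (e (f 0)).2 = cls (e (f 3)).2 := by
  simpa using cls_label_natCast hf hk le_rfl

theorem exists_cycle_eq_familyTriple (hk : 3 ≤ k) (hf : (toKDSMI e).IsFamily f) :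
    ∃ j, cycle j = familyTriple e f :=
  let ⟨h0, h1, h2⟩ := familyTriple_mem_prefs hk hf
  exists_cycle_eq h0 h1 h2 (cls_label_zero hk hf).symm

theorem label_ne_of_ne {F : Finset (ZMod k → V)} (hM : (toKDSMI e).IsMatching F)
    {f g : ZMod k → V} (hf : f ∈ F) (hg : g ∈ F) (hfg : f ≠ g) (i : ZMod k) :
    (e (f i)).2 ≠ (e (g i)).2 := fun h =>
  hfg <| hM.eq_of_apply_eq hf hg <| e.injective <|
    Prod.ext (((hM.1 f hf).1 i).trans ((hM.1 g hg).1 i).symm) h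

theorem exists_cycleBlocks_familyTriple (hk : 3 ≤ k) {F : Finset (ZMod k → V)}
    (hM : (toKDSMI e).IsMatching F) : ∃ j, CycleBlocks (· ∈ F) (familyTriple e) (cycle j) := by
  classical
  let S := Finset.univ.filter fun j => ∃ f ∈ F, familyTriple e f = cycle j
  have hS : ∀ j ∈ S, ∃ f ∈ F, familyTriple e f = cycle j := fun j hj => (Finset.mem_filter.1 hj).2
  obtain ⟨j, hj⟩ := exists_cycleBlocks S fun i hi i' hi' hne => by
    obtain ⟨f, hf, hfi⟩ := hS i hi
    obtain ⟨g, hg, hgi⟩ := hS i' hi'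
    have hfg : f ≠ g := by
      rintro rfl
      exact hne (cycle_injective (hfi.symm.trans hgi))
    rw [← hfi, ← hgi]
    exact ⟨label_ne_of_ne hM hf hg hfg 0, label_ne_of_ne hM hf hg hfg 1,
      label_ne_of_ne hM hf hg hfg 2⟩
  refine ⟨j, hj.mono fun f hf => ?_⟩
  obtain ⟨i, hi⟩ := exists_cycle_eq_familyTriple hk (hM.1 f hf)
  exact ⟨i, Finset.mem_filter.2 ⟨Finset.mem_univ _, f, hf, hi.symm⟩, hi⟩

def blockingLabel (t : Fin 5 × Fin 5 × Fin 5) (X : ZMod k → Fin 5) (i : ZMod k) : Fin 5 :=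
  if i.val = 0 then t.1 else if i.val = 1 then t.2.1 else if i.val = 2 then t.2.2 else X i

theorem blockingLabel_zero (t : Fin 5 × Fin 5 × Fin 5) (X : ZMod k → Fin 5) :
    blockingLabel t X 0 = t.1 := by
  simp [blockingLabel]

theorem blockingLabel_one (hk : 3 ≤ k) (t : Fin 5 × Fin 5 × Fin 5) (X : ZMod k → Fin 5) :
    blockingLabel t X 1 = t.2.1 := by
  simp [blockingLabel, ZMod.val_one_eq_one_mod, Nat.mod_eq_of_lt (show 1 < k by omega)]

theorem blockingLabel_two (hk : 3 ≤ k) (t : Fin 5 × Fin 5 × Fin 5) (X : ZMod k → Fin 5) :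
    blockingLabel t X 2 = t.2.2 := by
  simp [blockingLabel, ZMod.val_ofNat_of_lt (show 2 < k by omega)]

theorem cls_blockingLabel {t : Fin 5 × Fin 5 × Fin 5} {X : ZMod k → Fin 5}
    (hX : ∀ i : ZMod k, 3 ≤ i.val → cls (X i) = cls t.1) (i : ZMod k) (h1 : i.val ≠ 1)
    (h2 : i.val ≠ 2) : cls (blockingLabel t X i) = cls t.1 := by
  unfold blockingLabel
  split_ifs with h0
  · rfl
  · exact hX i (by omega)

variable [NeZero k]

theorem label_zero_eq_cls (hk : 3 ≤ k) (hf : (toKDSMI e).IsFamily f) {i : ZMod k}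
    (hi : 3 ≤ i.val) : (e (f 0)).2 = cls (e (f i)).2 := by
  have hi' := cls_label_natCast hf hi (ZMod.val_lt i).le
  rw [ZMod.natCast_zmod_val] at hi'
  rw [hi', ← cls_label_zero hk hf, cls_of_mem_pref0 (familyTriple_mem_prefs hk hf).1]

theorem exists_free_label (hk : 3 ≤ k) {F : Finset (ZMod k → V)} (hM : (toKDSMI e).IsMatching F)
    {j : Fin 5} (hB : CycleBlocks (· ∈ F) (familyTriple e) (cycle j)) {i : ZMod k}
    (hi : 3 ≤ i.val) : ∃ x, cls x = cls (cycle j).1 ∧ ∀ f ∈ F, (e (f i)).2 ≠ x := by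
  have ha : cls (cycle j).1 = (cycle j).1 := cls_of_mem_pref0 (mem_pref_cycle j).1
  have hzero : ∀ f ∈ F, (e (f 0)).2 = cls (e (f i)).2 := fun f hf =>
    label_zero_eq_cls hk (hM.1 f hf) hi
  rw [ha]
  by_cases h : ∃ f₀ ∈ F, (e (f₀ 0)).2 = (cycle j).1
  · obtain ⟨f₀, hf₀, h₀⟩ := h
    obtain ⟨x, hx, hcls⟩ := exists_ne_cls_eq (hB.1 f₀ hf₀ h₀).1 ((hzero f₀ hf₀).symm.trans h₀)
    refine ⟨x, hcls, fun f hf hfx => ?_⟩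
    obtain rfl : f = f₀ := by
      by_contra hne
      exact label_ne_of_ne hM hf hf₀ hne 0 (by rw [hzero f hf, hfx, hcls, h₀])
    exact hx hfx.symm
  · exact ⟨(cycle j).1, ha, fun f hf hfx => h ⟨f, hf, by rw [hzero f hf, hfx, ha]⟩⟩

theorem blockingLabel_add_one_mem (hk : 3 ≤ k) {j : Fin 5} {X : ZMod k → Fin 5}
    (hX : ∀ i : ZMod k, 3 ≤ i.val → cls (X i) = cls (cycle j).1) (i : ZMod k) :
    blockingLabel (cycle j) X (i + 1) ∈ layerPrefs i.val (blockingLabel (cycle j) X i) := by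
  obtain ⟨hb, hc, hx⟩ := mem_pref_cycle j
  have htail := cls_blockingLabel hX
  have hsucc := ZMod.val_add_one_eq_or i
  rcases (by omega : i.val = 0 ∨ i.val = 1 ∨ i.val = 2 ∨ 3 ≤ i.val) with h | h | h | h
  · simpa [blockingLabel, layerPrefs, h, show (i + 1).val = 1 by omega] using hb
  · simpa [blockingLabel, layerPrefs, h, show (i + 1).val = 2 by omega] using hc
  · rw [h]
    simp only [blockingLabel, h]
    exact hx _ (htail _ (by omega) (by omega))
  · rw [layerPrefs_of_three_le h, mem_prefCls, htail _ (by omega) (by omega),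
      htail _ (by omega) (by omega)]

theorem isFamily_blockingCycle (hk : 3 ≤ k) {j : Fin 5} {X : ZMod k → Fin 5}
    (hX : ∀ i : ZMod k, 3 ≤ i.val → cls (X i) = cls (cycle j).1) :
    (toKDSMI e).IsFamily fun i => e.symm (i, blockingLabel (cycle j) X i) :=
  ⟨fun i => by simp [toKDSMI, ofLists],
    fun i => ofLists_E.2 (by simpa using blockingLabel_add_one_mem hk hX i)⟩

theorem prefers_blockingCycle (hk : 3 ≤ k) {F : Finset (ZMod k → V)}
    (hM : (toKDSMI e).IsMatching F) {j : Fin 5}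
    (hB : CycleBlocks (· ∈ F) (familyTriple e) (cycle j)) {X : ZMod k → Fin 5}
    (hX : ∀ i : ZMod k, 3 ≤ i.val → cls (X i) = cls (cycle j).1 ∧ ∀ f ∈ F, (e (f i)).2 ≠ X i)
    (i : ZMod k) :
    (toKDSMI e).Prefers F (e.symm (i, blockingLabel (cycle j) X i))
      (e.symm (i + 1, blockingLabel (cycle j) X (i + 1))) := by
  intro u hu
  obtain ⟨f, hf, hfi, rfl⟩ :=
    hM.exists_of_matchedTo (i := i) (by simp [toKDSMI, ofLists]) hu
  have hlabel : (e (f i)).2 = blockingLabel (cycle j) X i := by simp [hfi]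
  simp only [toKDSMI, ofLists, Equiv.apply_symm_apply, add_lt_add_iff_right]
  rcases (by omega : i.val = 0 ∨ i.val = 1 ∨ i.val = 2 ∨ 3 ≤ i.val) with h | h | h | h
  · obtain rfl : i = 0 := (ZMod.val_eq_zero i).1 h
    rw [blockingLabel_zero] at hlabel ⊢
    rw [ZMod.val_zero, zero_add, blockingLabel_one hk]
    exact (hB.1 f hf hlabel).2
  · obtain rfl : i = 1 := by rw [← ZMod.natCast_zmod_val i, h, Nat.cast_one]
    rw [blockingLabel_one hk] at hlabel ⊢
    rw [h, one_add_one_eq_two, blockingLabel_two hk]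
    exact hB.2.1 f hf hlabel
  · obtain rfl : i = 2 := by rw [← ZMod.natCast_zmod_val i, h, Nat.cast_ofNat]
    rw [blockingLabel_two hk] at hlabel ⊢
    rw [h, two_add_one_eq_three]
    have h3 := ZMod.val_add_one_eq_or (2 : ZMod k)
    rw [two_add_one_eq_three, h] at h3
    have hx3 : cls (blockingLabel (cycle j) X 3) = cls (cycle j).1 :=
      cls_blockingLabel (fun i hi => (hX i hi).1) 3 (by omega) (by omega)
    exact hB.2.2 f hf hlabel _ _ hx3 (cls_label_zero hk (hM.1 f hf)).symm
  · refine absurd hlabel ?_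
    simpa [blockingLabel, show i.val ≠ 0 by omega, show i.val ≠ 1 by omega,
      show i.val ≠ 2 by omega] using (hX i h).2 f hf

theorem not_weaklyStable (hk : 3 ≤ k) {F : Finset (ZMod k → V)}
    (hM : (toKDSMI e).IsMatching F) : ¬ (toKDSMI e).WeaklyStable F := by
  obtain ⟨j, hB⟩ := exists_cycleBlocks_familyTriple hk hM
  have hfree : ∀ i : ZMod k, ∃ x, 3 ≤ i.val →
      cls x = cls (cycle j).1 ∧ ∀ f ∈ F, (e (f i)).2 ≠ x := fun i =>
    if hi : 3 ≤ i.val then (exists_free_label hk hM hB hi).imp fun _ hx _ => hx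
    else ⟨0, fun h => absurd h hi⟩
  choose X hX using hfree
  exact fun hS => hS _ ⟨isFamily_blockingCycle hk fun i hi => (hX i hi).1,
    prefers_blockingCycle hk hM hB hX⟩

end KDSMI.Gadget

/-- For every `k ≥ 3` there is a `k`-DSMI-CYC instance of dimension 5 that admits no
weakly stable matching. -/
theorem stmt_19 :
    ∀ k : ℕ, 3 ≤ k → ∃ G : KDSMI k (Fin (5 * k)) 5,
      ¬ ∃ F : Finset (ZMod k → Fin (5 * k)), G.IsMatching F ∧ G.WeaklyStable F := by
  intro k hk
  have : NeZero k := ⟨by omega⟩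
  let e : Fin (5 * k) ≃ ZMod k × Fin 5 :=
    Fintype.equivOfCardEq (by simp [ZMod.card, mul_comm])
  exact ⟨KDSMI.Gadget.toKDSMI e, fun ⟨_, hM, hS⟩ => KDSMI.Gadget.not_weaklyStable hk hM hS⟩
end
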